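/- arXiv:0706.2440 — 2 statements merged into one kernel-verified Lean document; each statement's English description precedes it below -/
import Mathlib

section
/- Let n, m, l be integers with n ≥ 2, m ≥ 18n, l ≥ m and l ≥ (n-2)(2m+1). Then the following strict inequality of rational numbers holds: (l²m + 9l² + 3lm + 15l + 2m - 4)/2 > (17l²n + (4n - n²)·l·(2m+1))/2 + (n³ - 6n² + 11n)/6. -/
/-- For integers `n ≥ 2`, `m ≥ 18n`, `l ≥ m`, `l ≥ (n-2)(2m+1)`, the lower bound
for the dimension of the component `W'` strictly exceeds the expected dimension:
`(l²m + 9l² + 3lm + 15l + 2m - 4)/2 > (17l²n + (4n - n²)·l·(2m+1))/2 + (n³ - 6n² + 11n)/6`. -/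
theorem dimension_exceeds_expected (n m l : ℤ) (hn : 2 ≤ n) (hm : 18 * n ≤ m)
    (hlm : m ≤ l) (hl : (n - 2) * (2 * m + 1) ≤ l) :
    ((l : ℚ) ^ 2 * m + 9 * l ^ 2 + 3 * l * m + 15 * l + 2 * m - 4) / 2
      > (17 * (l : ℚ) ^ 2 * n + (4 * n - n ^ 2) * l * (2 * m + 1)) / 2
        + (n ^ 3 - 6 * n ^ 2 + 11 * n) / 6 := by
  have hn' : (2:ℚ) ≤ n := by exact_mod_cast hn
  have hm' : 18 * (n:ℚ) ≤ m := by exact_mod_cast hm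
  have hlm' : (m:ℚ) ≤ l := by exact_mod_cast hlm
  have hl' : ((n:ℚ) - 2) * (2 * m + 1) ≤ l := by exact_mod_cast hl
  have h1 : (0:ℚ) ≤ ((l:ℚ) - m) := by linarith
  have h2 : (0:ℚ) ≤ ((m:ℚ) - 18*n) := by linarith
  have h3 : (0:ℚ) ≤ ((l:ℚ) - (n-2)*(2*m+1)) := by linarith
  have h4 : (0:ℚ) ≤ (n:ℚ) - 2 := by linarith
  have hm0 : (36:ℚ) ≤ m := by linarith
  have hl0 : (36:ℚ) ≤ l := by linarith
  nlinarith [mul_nonneg (mul_nonneg h2 (by linarith : (0:ℚ) ≤ l)) (by linarith : (0:ℚ) ≤ l),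
    mul_nonneg (mul_nonneg h1 (by linarith : (0:ℚ) ≤ n)) (by linarith : (0:ℚ) ≤ l),
    mul_nonneg (mul_nonneg h3 (by linarith : (0:ℚ) ≤ n)) (by linarith : (0:ℚ) ≤ l),
    mul_nonneg (mul_nonneg h1 (by linarith : (0:ℚ) ≤ l)) (by linarith : (0:ℚ) ≤ m),
    mul_nonneg (mul_nonneg h3 (by linarith : (0:ℚ) ≤ l)) h4,
    mul_nonneg (mul_nonneg h2 h2) h2,
    mul_nonneg (mul_nonneg h2 (by linarith : (0:ℚ) ≤ m)) (by linarith : (0:ℚ) ≤ l),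
    mul_nonneg h4 h4, mul_pos (by linarith : (0:ℚ) < l) (by linarith : (0:ℚ) < m)]
end

section
/- Let n, m, l be positive integers with n ≥ 2 and l ≥ (n-2)(2m+1). Then 2l²n·m(m+1) ≤ C(2lm+l+2, 3) - C(2lm+l+2-n, 3), where C(·,3) denotes the usual binomial coefficient (note that 2lm+l+2-n ≥ 0 under these hypotheses). -/
private lemma c2aux (k : ℕ) : 2 * (k+2).choose 2 = (k+2)*(k+1) := by
  induction k with
  | zero => rfl
  | succ k ih =>
    have : (k+1+2).choose 2 = (k+2).choose 1 + (k+2).choose 2 := Nat.choose_succ_succ _ _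
    rw [this, Nat.choose_one_right]
    nlinarith [ih]

private lemma c3aux (k : ℕ) : 6 * (k+2).choose 3 = (k+2)*(k+1)*k := by
  induction k with
  | zero => rfl
  | succ k ih =>
    have : (k+1+2).choose 3 = (k+2).choose 2 + (k+2).choose 3 := Nat.choose_succ_succ _ _
    rw [this]
    nlinarith [ih, c2aux k]

/-- For positive integers `n, m, l` with `n ≥ 2` and `l ≥ (n-2)(2m+1)`:
`2l²n·m(m+1) ≤ C(2lm+l+2, 3) - C(2lm+l+2-n, 3)` with the usual binomial coefficient. -/
theorem degree_bound (n m l : ℕ) (hn0 : 0 < n) (hm0 : 0 < m) (hl0 : 0 < l)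
    (hn : 2 ≤ n) (hl : (n - 2) * (2 * m + 1) ≤ l) :
    (2 * l ^ 2 * n * (m * (m + 1)) : ℤ)
      ≤ ((2 * l * m + l + 2).choose 3 : ℤ) - ((2 * l * m + l + 2 - n).choose 3 : ℤ) := by
  obtain ⟨a, rfl⟩ : ∃ a, n = a + 2 := ⟨n - 2, by omega⟩
  have hl' : a * (2 * m + 1) ≤ l := by simpa using hl
  have ha : a ≤ l := le_trans (Nat.le_mul_of_pos_right a (by omega)) hl'
  have hml : 1 ≤ l * m := Nat.one_le_iff_ne_zero.mpr (by positivity)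
  have haK : a + 2 ≤ 2 * l * m + l := by nlinarith
  obtain ⟨c, hc⟩ : ∃ c, 2 * l * m + l = a + c + 2 := ⟨2 * l * m + l - a - 2, by omega⟩
  have hsub : 2 * l * m + l + 2 - (a + 2) = c + 2 := by omega
  rw [hsub]
  have e1 : (6 : ℤ) * ((2 * l * m + l + 2).choose 3 : ℤ)
      = (2 * (l:ℤ) * m + l + 2) * (2 * l * m + l + 1) * (2 * l * m + l) := by
    exact_mod_cast congrArg (Nat.cast (R := ℤ)) (c3aux (2 * l * m + l))
  have e2 : (6 : ℤ) * ((c + 2).choose 3 : ℤ) = ((c:ℤ) + 2) * (c + 1) * c := by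
    exact_mod_cast congrArg (Nat.cast (R := ℤ)) (c3aux c)
  have hcZ : 2 * (l:ℤ) * m + l = (a:ℤ) + c + 2 := by exact_mod_cast hc
  have hlZ : (a:ℤ) * (2 * m + 1) ≤ l := by exact_mod_cast hl'
  have hL0 : (0:ℤ) ≤ l := by positivity
  have key : 3 * (2 * (l:ℤ) * m + l) * a ≤ 3 * (l:ℤ) ^ 2 := by nlinarith
  have key2 : (0:ℤ) ≤ ((a:ℤ) + 2) *
      (3 * (l:ℤ) ^ 2 - 3 * (2 * (l:ℤ) * m + l) * a + a ^ 2 + a) := by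
    have hA0 : (0:ℤ) ≤ (a:ℤ) := Int.natCast_nonneg a
    apply mul_nonneg (by linarith)
    nlinarith
  have hC : (c:ℤ) = 2 * (l:ℤ) * m + l - a - 2 := by linarith
  push_cast
  rw [hC] at e2
  linarith [e1, e2, key2]
end
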